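/- arXiv:1105.3828 — 3 statements merged into one kernel-verified Lean document; each statement's English description precedes it below -/
import Mathlib

section
/- Let t ∈ ℝ³ with ‖t‖ = 1 and let R ∈ SO(3) be given by the Cayley parametrization R = R(u,v,w). Suppose δ = u t₁ + v t₂ + w t₃ ≠ 0, and define u' = (−t₁ − v t₃ + w t₂)/δ, v' = (−t₂ − w t₁ + u t₃)/δ, w' = (−t₃ − u t₂ + v t₁)/δ. Then [t]ₓ R(u', v', w') = −[t]ₓ R(u, v, w). -/
open Matrix

noncomputable def skewMat (a : Fin 3 → ℝ) : Matrix (Fin 3) (Fin 3) ℝ :=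
  !![0, -a 2, a 1; a 2, 0, -a 0; -a 1, a 0, 0]

noncomputable def cayley (u v w : ℝ) : Matrix (Fin 3) (Fin 3) ℝ :=
  (1 - skewMat ![u, v, w]) * (1 + skewMat ![u, v, w])⁻¹

/-- Explicit form of the Cayley rotation matrix. -/
lemma cayley_eq (u v w : ℝ) :
    cayley u v w = (1 + u^2 + v^2 + w^2)⁻¹ •
      !![1 + u^2 - v^2 - w^2, 2*(u*v + w), 2*(u*w - v);
         2*(u*v - w), 1 + v^2 - u^2 - w^2, 2*(v*w + u);
         2*(u*w + v), 2*(v*w - u), 1 + w^2 - u^2 - v^2] := by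
  have hk : (1 + u^2 + v^2 + w^2) ≠ 0 := by positivity
  have hinv : (1 + skewMat ![u, v, w])⁻¹ = (1 + u^2 + v^2 + w^2)⁻¹ •
      !![1 + u^2, u*v + w, u*w - v;
         u*v - w, 1 + v^2, v*w + u;
         u*w + v, v*w - u, 1 + w^2] := by
    apply Matrix.inv_eq_right_inv
    ext i j
    fin_cases i <;> fin_cases j <;>
      · simp [skewMat, Matrix.mul_apply, Fin.sum_univ_three, Matrix.one_apply]
        field_simp
        ring
  unfold cayley
  rw [hinv, Matrix.mul_smul]
  congr 1
  ext i j
  fin_cases i <;> fin_cases j <;>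
    · simp [skewMat, Matrix.mul_apply, Fin.sum_univ_three, Matrix.one_apply]
      ring

set_option maxHeartbeats 2000000 in
/-- Key polynomial identity behind the sign flip of the essential matrix. -/
lemma key (t : Fin 3 → ℝ) (u v w : ℝ) :
    skewMat t *
      !![(u*t 0 + v*t 1 + w*t 2)^2 + (-t 0 - v*t 2 + w*t 1)^2
           - (-t 1 - w*t 0 + u*t 2)^2 - (-t 2 - u*t 1 + v*t 0)^2,
         2*((-t 0 - v*t 2 + w*t 1)*(-t 1 - w*t 0 + u*t 2)
           + (-t 2 - u*t 1 + v*t 0)*(u*t 0 + v*t 1 + w*t 2)),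
         2*((-t 0 - v*t 2 + w*t 1)*(-t 2 - u*t 1 + v*t 0)
           - (-t 1 - w*t 0 + u*t 2)*(u*t 0 + v*t 1 + w*t 2));
         2*((-t 0 - v*t 2 + w*t 1)*(-t 1 - w*t 0 + u*t 2)
           - (-t 2 - u*t 1 + v*t 0)*(u*t 0 + v*t 1 + w*t 2)),
         (u*t 0 + v*t 1 + w*t 2)^2 + (-t 1 - w*t 0 + u*t 2)^2
           - (-t 0 - v*t 2 + w*t 1)^2 - (-t 2 - u*t 1 + v*t 0)^2,
         2*((-t 1 - w*t 0 + u*t 2)*(-t 2 - u*t 1 + v*t 0)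
           + (-t 0 - v*t 2 + w*t 1)*(u*t 0 + v*t 1 + w*t 2));
         2*((-t 0 - v*t 2 + w*t 1)*(-t 2 - u*t 1 + v*t 0)
           + (-t 1 - w*t 0 + u*t 2)*(u*t 0 + v*t 1 + w*t 2)),
         2*((-t 1 - w*t 0 + u*t 2)*(-t 2 - u*t 1 + v*t 0)
           - (-t 0 - v*t 2 + w*t 1)*(u*t 0 + v*t 1 + w*t 2)),
         (u*t 0 + v*t 1 + w*t 2)^2 + (-t 2 - u*t 1 + v*t 0)^2
           - (-t 0 - v*t 2 + w*t 1)^2 - (-t 1 - w*t 0 + u*t 2)^2]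
    = -((t 0^2 + t 1^2 + t 2^2) • (skewMat t *
      !![1 + u^2 - v^2 - w^2, 2*(u*v + w), 2*(u*w - v);
         2*(u*v - w), 1 + v^2 - u^2 - w^2, 2*(v*w + u);
         2*(u*w + v), 2*(v*w - u), 1 + w^2 - u^2 - v^2])) := by
  ext i j
  fin_cases i <;> fin_cases j <;>
    · simp [skewMat, Matrix.mul_apply, Fin.sum_univ_three]
      ring

set_option maxHeartbeats 2000000 in
/-- the involution `(u,v,w) ↦ (u',v',w')` flips the sign of the
essential matrix `E = [t]ₓ R(u,v,w)`. -/
theorem stmt3 (t : Fin 3 → ℝ) (u v w : ℝ)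
    (ht : t 0 ^ 2 + t 1 ^ 2 + t 2 ^ 2 = 1)
    (hδ : u * t 0 + v * t 1 + w * t 2 ≠ 0) :
    let δ := u * t 0 + v * t 1 + w * t 2
    let u' := (-t 0 - v * t 2 + w * t 1) / δ
    let v' := (-t 1 - w * t 0 + u * t 2) / δ
    let w' := (-t 2 - u * t 1 + v * t 0) / δ
    skewMat t * cayley u' v' w' = -(skewMat t * cayley u v w) := by
  intro δ u' v' w'
  have hδ' : δ ≠ 0 := hδ
  have hk : (1 + u^2 + v^2 + w^2) ≠ 0 := by positivity
  have hδ2 : δ^2 ≠ 0 := pow_ne_zero _ hδ'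
  rw [cayley_eq, cayley_eq]
  have hk' : 1 + u'^2 + v'^2 + w'^2 = (1 + u^2 + v^2 + w^2) / δ^2 := by
    show 1 + ((-t 0 - v * t 2 + w * t 1) / δ)^2 + ((-t 1 - w * t 0 + u * t 2) / δ)^2
        + ((-t 2 - u * t 1 + v * t 0) / δ)^2 = (1 + u^2 + v^2 + w^2) / δ^2
    rw [div_pow, div_pow, div_pow]
    field_simp
    linear_combination (1 + u^2 + v^2 + w^2) * ht
  have hM' : (!![1 + u'^2 - v'^2 - w'^2, 2*(u'*v' + w'), 2*(u'*w' - v');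
         2*(u'*v' - w'), 1 + v'^2 - u'^2 - w'^2, 2*(v'*w' + u');
         2*(u'*w' + v'), 2*(v'*w' - u'), 1 + w'^2 - u'^2 - v'^2] : Matrix (Fin 3) (Fin 3) ℝ)
      = (δ^2)⁻¹ •
      !![δ^2 + (-t 0 - v*t 2 + w*t 1)^2
           - (-t 1 - w*t 0 + u*t 2)^2 - (-t 2 - u*t 1 + v*t 0)^2,
         2*((-t 0 - v*t 2 + w*t 1)*(-t 1 - w*t 0 + u*t 2)
           + (-t 2 - u*t 1 + v*t 0)*δ),
         2*((-t 0 - v*t 2 + w*t 1)*(-t 2 - u*t 1 + v*t 0)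
           - (-t 1 - w*t 0 + u*t 2)*δ);
         2*((-t 0 - v*t 2 + w*t 1)*(-t 1 - w*t 0 + u*t 2)
           - (-t 2 - u*t 1 + v*t 0)*δ),
         δ^2 + (-t 1 - w*t 0 + u*t 2)^2
           - (-t 0 - v*t 2 + w*t 1)^2 - (-t 2 - u*t 1 + v*t 0)^2,
         2*((-t 1 - w*t 0 + u*t 2)*(-t 2 - u*t 1 + v*t 0)
           + (-t 0 - v*t 2 + w*t 1)*δ);
         2*((-t 0 - v*t 2 + w*t 1)*(-t 2 - u*t 1 + v*t 0)
           + (-t 1 - w*t 0 + u*t 2)*δ),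
         2*((-t 1 - w*t 0 + u*t 2)*(-t 2 - u*t 1 + v*t 0)
           - (-t 0 - v*t 2 + w*t 1)*δ),
         δ^2 + (-t 2 - u*t 1 + v*t 0)^2
           - (-t 0 - v*t 2 + w*t 1)^2 - (-t 1 - w*t 0 + u*t 2)^2] := by
    have hu' : u' = (-t 0 - v * t 2 + w * t 1) / δ := rfl
    have hv' : v' = (-t 1 - w * t 0 + u * t 2) / δ := rfl
    have hw' : w' = (-t 2 - u * t 1 + v * t 0) / δ := rfl
    ext i j
    fin_cases i <;> fin_cases j <;>
      · simp [hu', hv', hw', Matrix.smul_apply]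
        try field_simp
        try ring
  rw [hk', hM', Matrix.mul_smul, Matrix.mul_smul, smul_smul]
  have hc : ((1 + u^2 + v^2 + w^2) / δ^2)⁻¹ * (δ^2)⁻¹ = (1 + u^2 + v^2 + w^2)⁻¹ := by
    rw [div_eq_mul_inv, mul_inv, inv_inv, mul_assoc, mul_inv_cancel₀ hδ2, mul_one]
  rw [hc]
  have hkey := key t u v w
  rw [show (u*t 0 + v*t 1 + w*t 2) = δ from rfl] at hkey
  rw [hkey, ht, one_smul, smul_neg, Matrix.mul_smul]
end

section
/- Let R(u,v,w) be the Cayley parametrization of rotations and fix a unit vector t with δ = u t₁ + v t₂ + w t₃ ≠ 0. The map (u,v,w) ↦ (u',v',w') given by u' = (−t₁ − v t₃ + w t₂)/δ, v' = (−t₂ − w t₁ + u t₃)/δ, w' = (−t₃ − u t₂ + v t₁)/δ is an involution: applying it twice returns (u,v,w). -/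
/-!
Writing `p = (u, v, w)` and `δ = p ⬝ t`, the map is `p ↦ -δ⁻¹ (t + p × t)`. Since `t ⬝ (p × t) = 0`
and `‖t‖ = 1`, the image has `p' ⬝ t = -δ⁻¹`, and the expansion `(p × t) × t = δ t - p` of the
vector triple product gives `t + p' × t = δ⁻¹ p`; applying the map again therefore returns `p`.
-/

open Matrix

variable {K : Type*} [Field K]

def cayleyReflect (t p : Fin 3 → K) : Fin 3 → K :=
  -(p ⬝ᵥ t)⁻¹ • (t + p ⨯₃ t)

theorem cayleyReflect_vec3 (t : Fin 3 → K) (u v w : K) :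
    cayleyReflect t ![u, v, w] =
      ![(-t 0 - v * t 2 + w * t 1) / (u * t 0 + v * t 1 + w * t 2),
        (-t 1 - w * t 0 + u * t 2) / (u * t 0 + v * t 1 + w * t 2),
        (-t 2 - u * t 1 + v * t 0) / (u * t 0 + v * t 1 + w * t 2)] := by
  rw [cayleyReflect, vec3_dotProduct, cross_apply]
  ext i
  fin_cases i <;>
  · simp only [Fin.zero_eta, Fin.mk_one, Fin.reduceFinMk, Pi.smul_apply, Pi.add_apply, cons_val,
      smul_eq_mul]
    ring

theorem cayleyReflect_dotProduct {t : Fin 3 → K} (ht : t ⬝ᵥ t = 1) (p : Fin 3 → K) :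
    cayleyReflect t p ⬝ᵥ t = -(p ⬝ᵥ t)⁻¹ := by
  rw [cayleyReflect, smul_dotProduct, add_dotProduct, ht, dotProduct_comm (p ⨯₃ t), dot_cross_self,
    add_zero, smul_eq_mul, mul_one]

theorem add_cross_cayleyReflect {t : Fin 3 → K} (ht : t ⬝ᵥ t = 1) {p : Fin 3 → K}
    (hp : p ⬝ᵥ t ≠ 0) : t + cayleyReflect t p ⨯₃ t = (p ⬝ᵥ t)⁻¹ • p := by
  rw [cayleyReflect, map_smul, LinearMap.smul_apply, map_add, LinearMap.add_apply, cross_self,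
    zero_add, cross_cross_eq_smul_sub_smul, ht, one_smul, smul_sub, smul_smul, neg_mul,
    inv_mul_cancel₀ hp]
  module

theorem cayleyReflect_cayleyReflect {t : Fin 3 → K} (ht : t ⬝ᵥ t = 1) {p : Fin 3 → K}
    (hp : p ⬝ᵥ t ≠ 0) : cayleyReflect t (cayleyReflect t p) = p := by
  rw [cayleyReflect, add_cross_cayleyReflect ht hp, cayleyReflect_dotProduct ht, inv_neg, inv_inv,
    neg_neg, smul_smul, mul_inv_cancel₀ hp, one_smul]

theorem stmt16_general (t : Fin 3 → ℝ) (u v w : ℝ)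
    (ht : t 0 ^ 2 + t 1 ^ 2 + t 2 ^ 2 = 1)
    (hδ : u * t 0 + v * t 1 + w * t 2 ≠ 0) :
    let δ := u * t 0 + v * t 1 + w * t 2
    let u' := (-t 0 - v * t 2 + w * t 1) / δ
    let v' := (-t 1 - w * t 0 + u * t 2) / δ
    let w' := (-t 2 - u * t 1 + v * t 0) / δ
    let δ' := u' * t 0 + v' * t 1 + w' * t 2
    (-t 0 - v' * t 2 + w' * t 1) / δ' = u ∧
    (-t 1 - w' * t 0 + u' * t 2) / δ' = v ∧
    (-t 2 - u' * t 1 + v' * t 0) / δ' = w := by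
  intro δ u' v' w' δ'
  have ht' : t ⬝ᵥ t = 1 := by rw [vec3_dotProduct]; linear_combination ht
  have hp : ![u, v, w] ⬝ᵥ t ≠ 0 := by rwa [vec3_dotProduct]
  have h := cayleyReflect_cayleyReflect ht' hp
  rw [cayleyReflect_vec3 t u v w, cayleyReflect_vec3] at h
  exact ⟨congrFun h 0, congrFun h 1, congrFun h 2⟩

/-- the map `(u,v,w) ↦ (u',v',w')` of Proposition 2 is an involution. -/
theorem stmt16 (t : Fin 3 → ℝ) (u v w : ℝ)
    (ht : t 0 ^ 2 + t 1 ^ 2 + t 2 ^ 2 = 1)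
    (hδ : u * t 0 + v * t 1 + w * t 2 ≠ 0)
    (hδ' : ((-t 0 - v * t 2 + w * t 1) / (u * t 0 + v * t 1 + w * t 2)) * t 0 +
           ((-t 1 - w * t 0 + u * t 2) / (u * t 0 + v * t 1 + w * t 2)) * t 1 +
           ((-t 2 - u * t 1 + v * t 0) / (u * t 0 + v * t 1 + w * t 2)) * t 2 ≠ 0) :
    let δ := u * t 0 + v * t 1 + w * t 2
    let u' := (-t 0 - v * t 2 + w * t 1) / δ
    let v' := (-t 1 - w * t 0 + u * t 2) / δ
    let w' := (-t 2 - u * t 1 + v * t 0) / δ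
    let δ' := u' * t 0 + v' * t 1 + w' * t 2
    (-t 0 - v' * t 2 + w' * t 1) / δ' = u ∧
    (-t 1 - w' * t 0 + u' * t 2) / δ' = v ∧
    (-t 2 - u' * t 1 + v' * t 0) / δ' = w :=
  stmt16_general t u v w ht hδ
end

section
/- Let t = (t₁, t₂, t₃) be a unit vector with t₂ = t₁ (vw + u)/(uw − v) (i.e., E₃₃ = 0 in the Cayley parametrization with uw ≠ v), and let δ = u t₁ + v t₂ + w t₃ ≠ 0. Then the third component of the involution of Proposition 2, w' = (−t₃ − u t₂ + v t₁)/δ, equals −1/w. -/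
theorem stmt17_general (t : Fin 3 → ℝ) (u v w : ℝ)
    (huv : u * w ≠ v)
    (ht2 : t 1 = t 0 * (v * w + u) / (u * w - v))
    (hδ : u * t 0 + v * t 1 + w * t 2 ≠ 0)
    (hw : w ≠ 0) :
    (-t 2 - u * t 1 + v * t 0) / (u * t 0 + v * t 1 + w * t 2) = -1 / w := by
  have hE₃₃ : t 1 * (u * w - v) = t 0 * (v * w + u) :=
    (eq_div_iff (sub_ne_zero.mpr huv)).mp ht2
  rw [div_eq_div_iff hδ hw]
  -- after clearing denominators the `t 2` terms cancel and what remains is `E₃₃ = 0`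
  linear_combination -hE₃₃

/-- if `t₂ = t₁(vw+u)/(uw−v)` (the condition `E₃₃ = 0` in the
Cayley parametrization) then the third component of the involution satisfies
`w' = −1/w`. -/
theorem stmt17 (t : Fin 3 → ℝ) (u v w : ℝ)
    (ht : t 0 ^ 2 + t 1 ^ 2 + t 2 ^ 2 = 1)
    (huv : u * w ≠ v)
    (ht2 : t 1 = t 0 * (v * w + u) / (u * w - v))
    (hδ : u * t 0 + v * t 1 + w * t 2 ≠ 0)
    (hw : w ≠ 0) :
    (-t 2 - u * t 1 + v * t 0) / (u * t 0 + v * t 1 + w * t 2) = -1 / w :=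
  stmt17_general t u v w huv ht2 hδ hw
end
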